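/- arXiv:2411.19877 — 2 statements merged into one kernel-verified Lean document; each statement's English description precedes it below -/
import Mathlib

section
/- If x ∈ range(A^T), then for any integer s ≥ 0, x^T (I - A^T A / ||A||_F^2)^s x ≤ (1 - κ_dem^{-2})^s ||x||^2, where κ_dem = ||A^+|| ||A||_F is the Demmel condition number. -/
open Matrix Finset
noncomputable section

/-- Squared Euclidean norm of a vector. -/
def vnormSq {k : ℕ} (x : Fin k → ℝ) : ℝ := ∑ i, x i ^ 2

/-- Squared Frobenius norm of a matrix. -/
def frobSq {n d : ℕ} (A : Matrix (Fin n) (Fin d) ℝ) : ℝ := ∑ i, vnormSq (A i)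

/-- Row sampling probability ‖a_i‖²/‖A‖_F² used by randomized Kaczmarz. -/
def rowProb {n d : ℕ} (A : Matrix (Fin n) (Fin d) ℝ) (i : Fin n) : ℝ := vnormSq (A i) / frobSq A

/-- Spectral norm (ℓ²-operator norm) of a matrix. -/
def matSpectralNorm {n d : ℕ} (M : Matrix (Fin n) (Fin d) ℝ) : ℝ :=
  ‖LinearMap.toContinuousLinearMap (Matrix.toEuclideanLin M)‖

/-- The four Penrose conditions characterizing the Moore–Penrose pseudoinverse. -/
def IsMoorePenrose {n d : ℕ} (A : Matrix (Fin n) (Fin d) ℝ) (Ap : Matrix (Fin d) (Fin n) ℝ) : Prop :=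
  A * Ap * A = A ∧ Ap * A * Ap = Ap ∧ (A * Ap)ᵀ = A * Ap ∧ (Ap * A)ᵀ = Ap * A

/-- Demmel condition number κ_dem = ‖A⁺‖ ‖A‖_F. -/
def kdem {n d : ℕ} (A : Matrix (Fin n) (Fin d) ℝ) (Ap : Matrix (Fin d) (Fin n) ℝ) : ℝ :=
  matSpectralNorm Ap * Real.sqrt (frobSq A)

/-- One randomized Kaczmarz update using row i. -/
def rkStep {n d : ℕ} (A : Matrix (Fin n) (Fin d) ℝ) (b : Fin n → ℝ) (i : Fin n) (x : Fin d → ℝ) :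
    Fin d → ℝ := x + ((b i - A i ⬝ᵥ x) / vnormSq (A i)) • A i

/-- Randomized Kaczmarz iterates along a fixed path ω of row indices. -/
def rkSeq {n d : ℕ} (A : Matrix (Fin n) (Fin d) ℝ) (b : Fin n → ℝ) (x0 : Fin d → ℝ)
    (ω : ℕ → Fin n) : ℕ → Fin d → ℝ
  | 0 => x0
  | t + 1 => rkStep A b (ω t) (rkSeq A b x0 ω t)

/-- Extend a finite path of indices to an infinite one. -/
def extendPath {n T : ℕ} [NeZero n] (ω : Fin T → Fin n) : ℕ → Fin n :=
  fun s => if h : s < T then ω ⟨s, h⟩ else 0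

/-- Probability of a finite path of i.i.d. row indices. -/
def pathWeight {n d T : ℕ} (A : Matrix (Fin n) (Fin d) ℝ) (ω : Fin T → Fin n) : ℝ :=
  ∏ t, rowProb A (ω t)

/-- The expected one-step Kaczmarz contraction matrix I - AᵀA/‖A‖_F². -/
def kacMat {n d : ℕ} (A : Matrix (Fin n) (Fin d) ℝ) : Matrix (Fin d) (Fin d) ℝ :=
  1 - (frobSq A)⁻¹ • (Aᵀ * A)

/-- x lies in the row space range(Aᵀ). -/
def inRowSpace {n d : ℕ} (A : Matrix (Fin n) (Fin d) ℝ) (x : Fin d → ℝ) : Prop :=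
  ∃ u : Fin n → ℝ, x = Aᵀ *ᵥ u

/-- RK-RR iterates: Kaczmarz step followed by weight decay by μ. -/
def rrSeq {n d : ℕ} (A : Matrix (Fin n) (Fin d) ℝ) (b : Fin n → ℝ) (μ : ℝ) (x0 : Fin d → ℝ)
    (ω : ℕ → Fin n) : ℕ → Fin d → ℝ
  | 0 => x0
  | t + 1 => μ • rkStep A b (ω t) (rrSeq A b μ x0 ω t)

/-- Orthogonal projection step (I - a aᵀ/‖a‖²) x for row a = A i. -/
def projStep {n d : ℕ} (A : Matrix (Fin n) (Fin d) ℝ) (i : Fin n) (x : Fin d → ℝ) : Fin d → ℝ :=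
  x - ((A i ⬝ᵥ x) / vnormSq (A i)) • A i

/-- RK-RR bias sequence m_{t+1} = μ (I - a aᵀ/‖a‖²) m_t. -/
def biasSeq {n d : ℕ} (A : Matrix (Fin n) (Fin d) ℝ) (μ : ℝ) (m0 : Fin d → ℝ)
    (ω : ℕ → Fin n) : ℕ → Fin d → ℝ
  | 0 => m0
  | t + 1 => μ • projStep A (ω t) (biasSeq A μ m0 ω t)

/-- RK-RR variance sequence v_{t+1} = μ(I - aaᵀ/‖a‖²)v_t + μ (b_i - aᵀx_μ)a/‖a‖² - (1-μ)x_μ. -/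
def varSeq {n d : ℕ} (A : Matrix (Fin n) (Fin d) ℝ) (b : Fin n → ℝ) (μ : ℝ) (xmu : Fin d → ℝ)
    (ω : ℕ → Fin n) : ℕ → Fin d → ℝ
  | 0 => 0
  | t + 1 => μ • projStep A (ω t) (varSeq A b μ xmu ω t)
      + (μ * ((b (ω t) - A (ω t) ⬝ᵥ xmu) / vnormSq (A (ω t)))) • A (ω t)
      - (1 - μ) • xmu

/-- Covariance matrix Σ = I_m + v 1_m 1_mᵀ. -/
def covM (m : ℕ) (v : ℝ) : Matrix (Fin m) (Fin m) ℝ := 1 + v • Matrix.of fun _ _ => 1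

/-- Block Σ_{S,T} of the covariance matrix Σ = I + v 1 1ᵀ. -/
def subBlock {m : ℕ} (v : ℝ) (S T : Finset (Fin m)) : Matrix ↥S ↥T ℝ :=
  (covM m v).submatrix (fun i => i.1) (fun j => j.1)

/-- A deterministic adaptive algorithm that accesses at most t entries of b
(given full access to A) and outputs an estimate of the least-squares solution. -/
structure RowAccessAlg (d t : ℕ) where
  query : (n : ℕ) → Matrix (Fin n) (Fin d) ℝ → (j : Fin t) → (Fin (j : ℕ) → ℝ) → Fin n
  output : (n : ℕ) → Matrix (Fin n) (Fin d) ℝ → (Fin t → ℝ) → Fin d → ℝ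

/-- The successive answers to the algorithm's adaptive queries. -/
def RowAccessAlg.answers {d t : ℕ} (alg : RowAccessAlg d t) (n : ℕ)
    (A : Matrix (Fin n) (Fin d) ℝ) (b : Fin n → ℝ) : (j : ℕ) → j < t → ℝ
  | j, h => b (alg.query n A ⟨j, h⟩ fun i => alg.answers n A b i (i.isLt.trans h))
  termination_by j _ => j

/-- The algorithm's output estimate on the problem (A, b). -/
def RowAccessAlg.run {d t : ℕ} (alg : RowAccessAlg d t) (n : ℕ)
    (A : Matrix (Fin n) (Fin d) ℝ) (b : Fin n → ℝ) : Fin d → ℝ :=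
  alg.output n A fun j => alg.answers n A b j j.isLt

/-! Diagonalise the symmetric matrix `K = I - AᵀA/‖A‖_F²` in an orthonormal eigenbasis `(vᵢ, λᵢ)`:
then `xᵀKˢx = ∑ λᵢˢ (vᵢ ⬝ x)²` and `‖x‖² = ∑ (vᵢ ⬝ x)²`, so it suffices to compare `λᵢ` with
`1 - κ_dem⁻²` termwise. Each `λᵢ = 1 - ‖A vᵢ‖²/‖A‖_F²` lies in `[0, 1]`. If `λᵢ = 1` then `A vᵢ = 0`,
so `vᵢ` is orthogonal to `range(Aᵀ) ∋ x` and the term vanishes. Otherwise `vᵢ` is a multiple of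
`AᵀA vᵢ`, hence lies in `range(Aᵀ)`, where `A⁺A` is the identity; so
`1 = ‖vᵢ‖² ≤ ‖A⁺‖² ‖A vᵢ‖²`, which is `λᵢ ≤ 1 - κ_dem⁻²`. -/

theorem Matrix.IsHermitian.dotProduct_pow_mulVec {ι : Type*} [Fintype ι] [DecidableEq ι]
    {M : Matrix ι ι ℝ} (hM : M.IsHermitian) (x : ι → ℝ) (s : ℕ) :
    x ⬝ᵥ (M ^ s *ᵥ x) = ∑ i, hM.eigenvalues i ^ s * (⇑(hM.eigenvectorBasis i) ⬝ᵥ x) ^ 2 := by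
  set U : Matrix ι ι ℝ := (hM.eigenvectorUnitary : Matrix ι ι ℝ)
  have hpow : M ^ s = U * diagonal (hM.eigenvalues ^ s) * Uᵀ := by
    conv_lhs => rw [hM.spectral_theorem]
    rw [← map_pow, Unitary.conjStarAlgAut_apply, diagonal_pow]
    rfl
  have hcoord : ∀ i, (Uᵀ *ᵥ x) i = ⇑(hM.eigenvectorBasis i) ⬝ᵥ x := fun i => rfl
  rw [hpow, ← mulVec_mulVec, ← mulVec_mulVec, dotProduct_mulVec, ← mulVec_transpose]
  simp only [dotProduct, mulVec_diagonal, hcoord, Pi.pow_apply]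
  exact sum_congr rfl fun i _ => by ring

theorem Matrix.IsHermitian.dotProduct_self_eq_sum {ι : Type*} [Fintype ι] [DecidableEq ι]
    {M : Matrix ι ι ℝ} (hM : M.IsHermitian) (x : ι → ℝ) :
    x ⬝ᵥ x = ∑ i, (⇑(hM.eigenvectorBasis i) ⬝ᵥ x) ^ 2 := by
  simpa using hM.dotProduct_pow_mulVec x 0

lemma vnormSq_eq_dotProduct {k : ℕ} (x : Fin k → ℝ) : vnormSq x = x ⬝ᵥ x := by
  simp [vnormSq, dotProduct, sq]

lemma vnormSq_nonneg {k : ℕ} (x : Fin k → ℝ) : 0 ≤ vnormSq x :=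
  sum_nonneg fun i _ => sq_nonneg (x i)

lemma frobSq_nonneg {n d : ℕ} (A : Matrix (Fin n) (Fin d) ℝ) : 0 ≤ frobSq A :=
  sum_nonneg fun i _ => vnormSq_nonneg (A i)

lemma vnormSq_eq_norm_sq {k : ℕ} (x : Fin k → ℝ) : vnormSq x = ‖WithLp.toLp 2 x‖ ^ 2 := by
  simp [vnormSq, EuclideanSpace.norm_sq_eq]

lemma vnormSq_mulVec_le_matSpectralNorm_sq_mul {n d : ℕ} (M : Matrix (Fin n) (Fin d) ℝ)
    (w : Fin d → ℝ) : vnormSq (M *ᵥ w) ≤ matSpectralNorm M ^ 2 * vnormSq w := by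
  rw [vnormSq_eq_norm_sq, vnormSq_eq_norm_sq, ← mul_pow]
  gcongr
  exact (LinearMap.toContinuousLinearMap (toEuclideanLin M)).le_opNorm (WithLp.toLp 2 w)

lemma Matrix.IsHermitian.vnormSq_eigenvectorBasis {k : ℕ} {M : Matrix (Fin k) (Fin k) ℝ}
    (hM : M.IsHermitian) (i : Fin k) : vnormSq ⇑(hM.eigenvectorBasis i) = 1 := by
  rw [vnormSq_eq_norm_sq, WithLp.toLp_ofLp, hM.eigenvectorBasis.orthonormal.1 i, one_pow]

section Kaczmarz

variable {n d : ℕ} {A : Matrix (Fin n) (Fin d) ℝ}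

variable (A) in
lemma vnormSq_mulVec_le_frobSq_mul (w : Fin d → ℝ) :
    vnormSq (A *ᵥ w) ≤ frobSq A * vnormSq w := by
  rw [frobSq, sum_mul]
  exact sum_le_sum fun i _ => sum_mul_sq_le_sq_mul_sq univ (A i) w

lemma dotProduct_eq_zero_of_inRowSpace {v x : Fin d → ℝ} (hv : A *ᵥ v = 0)
    (hx : inRowSpace A x) : v ⬝ᵥ x = 0 := by
  obtain ⟨u, rfl⟩ := hx
  rw [dotProduct_mulVec, vecMul_transpose, hv, zero_dotProduct]

lemma IsMoorePenrose.mulVec_mulVec_of_inRowSpace {Ap : Matrix (Fin d) (Fin n) ℝ}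
    (hAp : IsMoorePenrose A Ap) {w : Fin d → ℝ} (hw : inRowSpace A w) :
    Ap *ᵥ (A *ᵥ w) = w := by
  obtain ⟨u, rfl⟩ := hw
  have hAAt : Ap * A * Aᵀ = Aᵀ := by
    rw [← hAp.2.2.2, ← transpose_mul, ← Matrix.mul_assoc, hAp.1]
  rw [mulVec_mulVec, mulVec_mulVec, hAAt]

lemma IsMoorePenrose.vnormSq_le_of_inRowSpace {Ap : Matrix (Fin d) (Fin n) ℝ}
    (hAp : IsMoorePenrose A Ap) {w : Fin d → ℝ} (hw : inRowSpace A w) :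
    vnormSq w ≤ matSpectralNorm Ap ^ 2 * vnormSq (A *ᵥ w) := by
  conv_lhs => rw [← hAp.mulVec_mulVec_of_inRowSpace hw]
  exact vnormSq_mulVec_le_matSpectralNorm_sq_mul Ap _

variable (A) in
lemma isHermitian_kacMat : (kacMat A).IsHermitian := by
  simp [kacMat, IsHermitian, conjTranspose_eq_transpose_of_trivial, transpose_sub,
    transpose_smul, transpose_mul]

variable (A) in
lemma dotProduct_kacMat_mulVec (w : Fin d → ℝ) :
    w ⬝ᵥ (kacMat A *ᵥ w) = vnormSq w - vnormSq (A *ᵥ w) / frobSq A := by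
  rw [kacMat, sub_mulVec, one_mulVec, smul_mulVec, ← mulVec_mulVec, dotProduct_sub,
    dotProduct_smul, dotProduct_mulVec, vecMul_transpose, vnormSq_eq_dotProduct,
    vnormSq_eq_dotProduct, smul_eq_mul, inv_mul_eq_div]

variable {v : Fin d → ℝ} {μ : ℝ}

lemma eigenvalue_kacMat_eq (hv : kacMat A *ᵥ v = μ • v) (hv1 : vnormSq v = 1) :
    μ = 1 - vnormSq (A *ᵥ v) / frobSq A := by
  have hquad := dotProduct_kacMat_mulVec A v
  rwa [hv, dotProduct_smul, ← vnormSq_eq_dotProduct, hv1, smul_eq_mul, mul_one] at hquad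

lemma eigenvalue_kacMat_nonneg (hv : kacMat A *ᵥ v = μ • v) (hv1 : vnormSq v = 1) : 0 ≤ μ := by
  have hle := vnormSq_mulVec_le_frobSq_mul A v
  rw [hv1, mul_one] at hle
  rw [eigenvalue_kacMat_eq hv hv1, sub_nonneg]
  exact div_le_one_of_le₀ hle (le_trans (vnormSq_nonneg _) hle)

lemma mulVec_eq_zero_of_kacMat_mulVec_eq_self (hv : kacMat A *ᵥ v = v) (hv1 : vnormSq v = 1) :
    A *ᵥ v = 0 := by
  have hle := vnormSq_mulVec_le_frobSq_mul A v
  rw [hv1, mul_one] at hle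
  have hratio : vnormSq (A *ᵥ v) / frobSq A = 0 := by
    linarith [eigenvalue_kacMat_eq (μ := 1) (by rwa [one_smul]) hv1]
  have hAv : vnormSq (A *ᵥ v) = 0 := by
    rcases div_eq_zero_iff.1 hratio with h | h
    · exact h
    · exact le_antisymm (h ▸ hle) (vnormSq_nonneg _)
  rwa [vnormSq_eq_dotProduct, dotProduct_self_eq_zero] at hAv

lemma inRowSpace_of_eigenvalue_kacMat_ne_one (hv : kacMat A *ᵥ v = μ • v) (hμ : μ ≠ 1) :
    inRowSpace A v := by
  refine ⟨((1 - μ)⁻¹ * (frobSq A)⁻¹) • (A *ᵥ v), ?_⟩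
  have hdiff : (1 - μ) • v = (frobSq A)⁻¹ • (Aᵀ *ᵥ (A *ᵥ v)) := by
    rw [sub_smul, one_smul, ← hv, kacMat, sub_mulVec, one_mulVec, smul_mulVec, mulVec_mulVec,
      sub_sub_cancel]
  rw [mulVec_smul, mul_smul, ← hdiff, smul_smul, inv_mul_cancel₀ (sub_ne_zero.2 hμ.symm),
    one_smul]

lemma eigenvalue_kacMat_le {Ap : Matrix (Fin d) (Fin n) ℝ} (hAp : IsMoorePenrose A Ap)
    (hv : kacMat A *ᵥ v = μ • v) (hv1 : vnormSq v = 1) (hμ : μ ≠ 1) :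
    μ ≤ 1 - (kdem A Ap ^ 2)⁻¹ := by
  have hpinv := hAp.vnormSq_le_of_inRowSpace (inRowSpace_of_eigenvalue_kacMat_ne_one hv hμ)
  rw [hv1] at hpinv
  have hσ : 0 < matSpectralNorm Ap ^ 2 :=
    pos_of_mul_pos_left (one_pos.trans_le hpinv) (vnormSq_nonneg _)
  have hAv : (matSpectralNorm Ap ^ 2)⁻¹ ≤ vnormSq (A *ᵥ v) := by
    rwa [inv_le_iff_one_le_mul₀ hσ, mul_comm]
  rw [eigenvalue_kacMat_eq hv hv1, kdem, mul_pow, Real.sq_sqrt (frobSq_nonneg A), mul_inv,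
    div_eq_mul_inv]
  gcongr
  exact inv_nonneg.2 (frobSq_nonneg A)

end Kaczmarz

theorem demmel_power_bound_general {n d : ℕ}
    (A : Matrix (Fin n) (Fin d) ℝ)
    (Ap : Matrix (Fin d) (Fin n) ℝ) (hAp : IsMoorePenrose A Ap)
    (x : Fin d → ℝ) (hx : inRowSpace A x) (s : ℕ) :
    x ⬝ᵥ ((kacMat A ^ s) *ᵥ x) ≤ (1 - (kdem A Ap ^ 2)⁻¹) ^ s * vnormSq x := by
  have hK := isHermitian_kacMat A
  rw [hK.dotProduct_pow_mulVec, vnormSq_eq_dotProduct, hK.dotProduct_self_eq_sum, mul_sum]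
  refine sum_le_sum fun i _ => ?_
  have hv := hK.mulVec_eigenvectorBasis i
  have hv1 := hK.vnormSq_eigenvectorBasis i
  by_cases hμ : hK.eigenvalues i = 1
  · rw [hμ, one_smul] at hv
    rw [dotProduct_eq_zero_of_inRowSpace (mulVec_eq_zero_of_kacMat_mulVec_eq_self hv hv1) hx]
    simp
  · gcongr
    · exact eigenvalue_kacMat_nonneg hv hv1
    · exact eigenvalue_kacMat_le hAp hv hv1 hμ

/-- for x ∈ range(Aᵀ) and s ≥ 0,
xᵀ (I - AᵀA/‖A‖_F²)^s x ≤ (1 - κ_dem⁻²)^s ‖x‖². -/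
theorem demmel_power_bound {n d : ℕ}
    (A : Matrix (Fin n) (Fin d) ℝ) (hA : A ≠ 0)
    (Ap : Matrix (Fin d) (Fin n) ℝ) (hAp : IsMoorePenrose A Ap)
    (x : Fin d → ℝ) (hx : inRowSpace A x) (s : ℕ) :
    x ⬝ᵥ ((kacMat A ^ s) *ᵥ x) ≤ (1 - (kdem A Ap ^ 2)⁻¹) ^ s * vnormSq x :=
  demmel_power_bound_general A Ap hAp x hx s
end
end

section
/- Assume x_0 ∈ range(A^T). Then the randomized Kaczmarz iterates satisfy E||x_r - x_star||^2 ≤ (1 - κ_dem^{-2})^r ||x_0 - x_star||^2 + ||A^+||^2 ||b - A x_star||^2 for every r ≥ 0. -/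
open Matrix Finset
noncomputable section

lemma vnormSq_add_smul {k : ℕ} (y a : Fin k → ℝ) (c : ℝ) :
    vnormSq (y + c • a) = vnormSq y + 2 * c * (a ⬝ᵥ y) + c ^ 2 * vnormSq a := by
  simp only [vnormSq, Pi.add_apply, Pi.smul_apply, smul_eq_mul, dotProduct, add_sq,
    sum_add_distrib, mul_sum]
  congr 1
  · congr 1
    exact sum_congr rfl fun _ _ => by ring
  · exact sum_congr rfl fun _ _ => by ring

lemma vnormSq_mulVec {m k : ℕ} (M : Matrix (Fin m) (Fin k) ℝ) (v : Fin k → ℝ) :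
    vnormSq (M *ᵥ v) = ∑ i, (M i ⬝ᵥ v) ^ 2 := rfl

lemma vnormSq_mulVec_le_matSpectralNorm {m k : ℕ} (M : Matrix (Fin m) (Fin k) ℝ)
    (v : Fin k → ℝ) : vnormSq (M *ᵥ v) ≤ matSpectralNorm M ^ 2 * vnormSq v := by
  rw [vnormSq_eq_norm_sq, vnormSq_eq_norm_sq, ← mul_pow]
  gcongr
  exact (LinearMap.toContinuousLinearMap (Matrix.toEuclideanLin M)).le_opNorm (WithLp.toLp 2 v)

lemma dotProduct_sq_le_vnormSq_mul {k : ℕ} (a v : Fin k → ℝ) :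
    (a ⬝ᵥ v) ^ 2 ≤ vnormSq a * vnormSq v := by
  simpa [dotProduct, vnormSq] using sum_mul_sq_le_sq_mul_sq univ a v

lemma vnormSq_mulVec_le_frobSq {m k : ℕ} (M : Matrix (Fin m) (Fin k) ℝ) (v : Fin k → ℝ) :
    vnormSq (M *ᵥ v) ≤ frobSq M * vnormSq v := by
  rw [vnormSq_mulVec, frobSq, sum_mul]
  gcongr with i
  exact dotProduct_sq_le_vnormSq_mul (M i) v

lemma frobSq_nonneg_s3 {m k : ℕ} (M : Matrix (Fin m) (Fin k) ℝ) : 0 ≤ frobSq M :=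
  sum_nonneg fun _ _ => vnormSq_nonneg _

lemma row_eq_transpose_mulVec_single {m k : ℕ} (M : Matrix (Fin m) (Fin k) ℝ) (i : Fin m) :
    M i = Mᵀ *ᵥ Pi.single i 1 := by
  ext j
  simp [mulVec, dotProduct, Pi.single_apply]

namespace inRowSpace

variable {n d : ℕ} {A : Matrix (Fin n) (Fin d) ℝ} {x y : Fin d → ℝ}

lemma add_smul_row (hx : inRowSpace A x) (c : ℝ) (i : Fin n) : inRowSpace A (x + c • A i) := by
  obtain ⟨u, rfl⟩ := hx
  refine ⟨u + c • Pi.single i 1, ?_⟩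
  rw [mulVec_add, mulVec_smul, ← row_eq_transpose_mulVec_single]

lemma sub (hx : inRowSpace A x) (hy : inRowSpace A y) : inRowSpace A (x - y) := by
  obtain ⟨u, rfl⟩ := hx
  obtain ⟨v, rfl⟩ := hy
  exact ⟨u - v, (mulVec_sub _ _ _).symm⟩

end inRowSpace

namespace IsMoorePenrose

variable {n d : ℕ} {A : Matrix (Fin n) (Fin d) ℝ} {Ap : Matrix (Fin d) (Fin n) ℝ}

lemma inRowSpace_mulVec (hAp : IsMoorePenrose A Ap) (b : Fin n → ℝ) :
    inRowSpace A (Ap *ᵥ b) := by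
  refine ⟨Apᵀ *ᵥ (Ap *ᵥ b), ?_⟩
  rw [mulVec_mulVec, mulVec_mulVec, ← transpose_mul, hAp.2.2.2, hAp.2.1]

lemma mul_mul_transpose_eq_transpose (hAp : IsMoorePenrose A Ap) : Ap * A * Aᵀ = Aᵀ := by
  rw [← hAp.2.2.2, ← transpose_mul, ← Matrix.mul_assoc, hAp.1]

lemma vnormSq_le_of_inRowSpace_s3 (hAp : IsMoorePenrose A Ap) {e : Fin d → ℝ}
    (he : inRowSpace A e) : vnormSq e ≤ matSpectralNorm Ap ^ 2 * vnormSq (A *ᵥ e) := by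
  obtain ⟨u, rfl⟩ := he
  have hproj : Ap *ᵥ (A *ᵥ (Aᵀ *ᵥ u)) = Aᵀ *ᵥ u := by
    rw [mulVec_mulVec, mulVec_mulVec, hAp.mul_mul_transpose_eq_transpose]
  simpa only [hproj] using vnormSq_mulVec_le_matSpectralNorm Ap (A *ᵥ (Aᵀ *ᵥ u))

end IsMoorePenrose

section Kaczmarz

variable {n d : ℕ} {A : Matrix (Fin n) (Fin d) ℝ}

lemma kdem_sq (Ap : Matrix (Fin d) (Fin n) ℝ) :
    kdem A Ap ^ 2 = matSpectralNorm Ap ^ 2 * frobSq A := by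
  rw [kdem, mul_pow, Real.sq_sqrt (frobSq_nonneg_s3 A)]

namespace IsMoorePenrose

variable {Ap : Matrix (Fin d) (Fin n) ℝ}

lemma one_le_kdem_sq (hAp : IsMoorePenrose A Ap) (hA : frobSq A ≠ 0) : 1 ≤ kdem A Ap ^ 2 := by
  obtain ⟨i, -, hi⟩ := exists_ne_zero_of_sum_ne_zero hA
  have hpos : 0 < vnormSq (A i) := (vnormSq_nonneg _).lt_of_ne' hi
  have hrow : inRowSpace A (A i) := ⟨Pi.single i 1, row_eq_transpose_mulVec_single A i⟩
  refine le_of_mul_le_mul_right ?_ hpos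
  calc 1 * vnormSq (A i) ≤ matSpectralNorm Ap ^ 2 * vnormSq (A *ᵥ A i) := by
        simpa using hAp.vnormSq_le_of_inRowSpace_s3 hrow
    _ ≤ matSpectralNorm Ap ^ 2 * (frobSq A * vnormSq (A i)) := by
        gcongr
        exact vnormSq_mulVec_le_frobSq A (A i)
    _ = kdem A Ap ^ 2 * vnormSq (A i) := by rw [kdem_sq]; ring

lemma inv_kdem_sq_le_one (hAp : IsMoorePenrose A Ap) : (kdem A Ap ^ 2)⁻¹ ≤ 1 := by
  by_cases hA : frobSq A = 0
  · simp [kdem_sq, hA]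
  · exact inv_le_one_of_one_le₀ (hAp.one_le_kdem_sq hA)

lemma inv_kdem_sq_mul_le (hAp : IsMoorePenrose A Ap) {e : Fin d → ℝ} (he : inRowSpace A e) :
    (kdem A Ap ^ 2)⁻¹ * vnormSq e ≤ vnormSq (A *ᵥ e) / frobSq A := by
  have hF := frobSq_nonneg_s3 A
  rw [kdem_sq]
  calc (matSpectralNorm Ap ^ 2 * frobSq A)⁻¹ * vnormSq e
      ≤ (matSpectralNorm Ap ^ 2 * frobSq A)⁻¹ * (matSpectralNorm Ap ^ 2 * vnormSq (A *ᵥ e)) := by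
        gcongr
        exact hAp.vnormSq_le_of_inRowSpace_s3 he
    _ = ((matSpectralNorm Ap ^ 2)⁻¹ * matSpectralNorm Ap ^ 2) * (vnormSq (A *ᵥ e) / frobSq A) := by
        ring
    _ ≤ vnormSq (A *ᵥ e) / frobSq A :=
        mul_le_of_le_one_left (div_nonneg (vnormSq_nonneg _) hF) inv_mul_le_one

end IsMoorePenrose

lemma rkStep_sub (b : Fin n → ℝ) (i : Fin n) (x y : Fin d → ℝ) :
    rkStep A b i x - y = (x - y) + ((b i - A i ⬝ᵥ x) / vnormSq (A i)) • A i := by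
  rw [rkStep, add_sub_right_comm]

lemma rowProb_nonneg (i : Fin n) : 0 ≤ rowProb A i :=
  div_nonneg (vnormSq_nonneg _) (frobSq_nonneg_s3 A)

lemma rowProb_mul_vnormSq_rkStep_sub_le (b : Fin n → ℝ) (i : Fin n) (x y : Fin d → ℝ) :
    rowProb A i * vnormSq (rkStep A b i x - y)
      ≤ (vnormSq (A i) * vnormSq (x - y) - (A i ⬝ᵥ (x - y)) ^ 2 + (b i - A i ⬝ᵥ y) ^ 2)
        / frobSq A := by
  rcases (vnormSq_nonneg (A i)).eq_or_lt with hi | hi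
  · have hp : rowProb A i = 0 := by rw [rowProb, ← hi, zero_div]
    have hcs := dotProduct_sq_le_vnormSq_mul (A i) (x - y)
    rw [hp, zero_mul]
    exact div_nonneg (add_nonneg (sub_nonneg.2 hcs) (sq_nonneg _)) (frobSq_nonneg_s3 A)
  · refine le_of_eq ?_
    have hx : A i ⬝ᵥ x = A i ⬝ᵥ (x - y) + A i ⬝ᵥ y := by rw [dotProduct_sub]; ring
    rw [rowProb, rkStep_sub, vnormSq_add_smul, hx]
    field_simp
    ring

lemma sum_rowProb_mul_vnormSq_rkStep_sub_le (b : Fin n → ℝ) (x y : Fin d → ℝ) :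
    ∑ i, rowProb A i * vnormSq (rkStep A b i x - y)
      ≤ vnormSq (x - y) - vnormSq (A *ᵥ (x - y)) / frobSq A
        + vnormSq (b - A *ᵥ y) / frobSq A := by
  calc ∑ i, rowProb A i * vnormSq (rkStep A b i x - y)
      ≤ ∑ i, (vnormSq (A i) * vnormSq (x - y) - (A i ⬝ᵥ (x - y)) ^ 2
          + (b i - A i ⬝ᵥ y) ^ 2) / frobSq A :=
        sum_le_sum fun i _ => rowProb_mul_vnormSq_rkStep_sub_le b i x y
    _ = (frobSq A * vnormSq (x - y) - vnormSq (A *ᵥ (x - y)) + vnormSq (b - A *ᵥ y))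
          / frobSq A := by
        rw [← sum_div, sum_add_distrib, sum_sub_distrib, ← sum_mul]
        rfl
    _ ≤ _ := by
        rcases eq_or_ne (frobSq A) 0 with hA | hA
        · simpa [hA] using vnormSq_nonneg (x - y)
        · exact le_of_eq (by field_simp)

lemma IsMoorePenrose.sum_rowProb_mul_vnormSq_rkStep_sub_le_of_inRowSpace
    {Ap : Matrix (Fin d) (Fin n) ℝ} (hAp : IsMoorePenrose A Ap) (b : Fin n → ℝ) {x y : Fin d → ℝ}
    (he : inRowSpace A (x - y)) :
    ∑ i, rowProb A i * vnormSq (rkStep A b i x - y)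
      ≤ (1 - (kdem A Ap ^ 2)⁻¹) * vnormSq (x - y) + vnormSq (b - A *ᵥ y) / frobSq A := by
  have hmean := sum_rowProb_mul_vnormSq_rkStep_sub_le (A := A) b x y
  have hcontract := hAp.inv_kdem_sq_mul_le he
  linarith

end Kaczmarz

lemma sum_pi_fin_succ_eq_sum_snoc {α β : Type*} [Fintype α] [AddCommMonoid β] {r : ℕ}
    (f : (Fin (r + 1) → α) → β) :
    ∑ ω, f ω = ∑ ω : Fin r → α, ∑ i, f (Fin.snoc ω i) := by
  rw [← (Fin.snocEquiv fun _ => α).sum_comp, Fintype.sum_prod_type, sum_comm]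
  rfl

section Paths

variable {n d : ℕ} {A : Matrix (Fin n) (Fin d) ℝ}

lemma pathWeight_nonneg {r : ℕ} (ω : Fin r → Fin n) : 0 ≤ pathWeight A ω :=
  prod_nonneg fun _ _ => rowProb_nonneg _

lemma pathWeight_snoc {r : ℕ} (ω : Fin r → Fin n) (i : Fin n) :
    pathWeight A (Fin.snoc ω i) = pathWeight A ω * rowProb A i := by
  simp [pathWeight, Fin.prod_univ_castSucc]

lemma sum_pathWeight_mul_eq_sum_snoc {r : ℕ} (f : (Fin (r + 1) → Fin n) → ℝ) :
    ∑ ω, pathWeight A ω * f ω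
      = ∑ ω : Fin r → Fin n, pathWeight A ω * ∑ i, rowProb A i * f (Fin.snoc ω i) := by
  rw [sum_pi_fin_succ_eq_sum_snoc]
  simp only [pathWeight_snoc, mul_sum, mul_assoc]

lemma sum_rowProb_le_one : ∑ i, rowProb A i ≤ 1 := by
  simp only [rowProb, ← sum_div]
  exact div_self_le_one _

lemma sum_pathWeight_le_one (r : ℕ) : ∑ ω : Fin r → Fin n, pathWeight A ω ≤ 1 := by
  induction r with
  | zero => simp [pathWeight]
  | succ r ih =>
    calc ∑ ω, pathWeight A ω = ∑ ω : Fin r → Fin n, pathWeight A ω * ∑ i, rowProb A i := by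
          simp only [sum_pi_fin_succ_eq_sum_snoc, pathWeight_snoc, mul_sum]
      _ ≤ ∑ ω : Fin r → Fin n, pathWeight A ω :=
          sum_le_sum fun ω _ => mul_le_of_le_one_right (pathWeight_nonneg ω) sum_rowProb_le_one
      _ ≤ 1 := ih

end Paths

section Iterates

variable {n d : ℕ} {A : Matrix (Fin n) (Fin d) ℝ} {b : Fin n → ℝ} {x0 y : Fin d → ℝ}

lemma rkSeq_congr {ω ω' : ℕ → Fin n} {t : ℕ} (h : ∀ s < t, ω s = ω' s) :
    rkSeq A b x0 ω t = rkSeq A b x0 ω' t := by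
  induction t with
  | zero => rfl
  | succ t ih =>
    simp only [rkSeq, h t t.lt_succ_self, ih fun s hs => h s (hs.trans t.lt_succ_self)]

lemma extendPath_snoc_of_lt [NeZero n] {r s : ℕ} (ω : Fin r → Fin n) (i : Fin n) (hs : s < r) :
    extendPath (Fin.snoc ω i) s = extendPath ω s := by
  simp only [extendPath, hs, hs.trans r.lt_succ_self, dif_pos]
  exact Fin.snoc_castSucc (α := fun _ => Fin n) i ω ⟨s, hs⟩

lemma extendPath_snoc_self [NeZero n] {r : ℕ} (ω : Fin r → Fin n) (i : Fin n) :
    extendPath (Fin.snoc ω i) r = i := by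
  rw [extendPath, dif_pos r.lt_succ_self]
  exact Fin.snoc_last (α := fun _ => Fin n) i ω

lemma rkSeq_extendPath_snoc [NeZero n] {r : ℕ} (ω : Fin r → Fin n) (i : Fin n) :
    rkSeq A b x0 (extendPath (Fin.snoc ω i)) (r + 1)
      = rkStep A b i (rkSeq A b x0 (extendPath ω) r) := by
  rw [rkSeq, extendPath_snoc_self, rkSeq_congr fun s hs => extendPath_snoc_of_lt ω i hs]

lemma inRowSpace_rkSeq_sub (h0 : inRowSpace A (x0 - y)) (ω : ℕ → Fin n) (t : ℕ) :
    inRowSpace A (rkSeq A b x0 ω t - y) := by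
  induction t with
  | zero => exact h0
  | succ t ih =>
    rw [rkSeq, rkStep_sub]
    exact ih.add_smul_row _ _

lemma sum_pathWeight_mul_vnormSq_rkSeq_sub_le [NeZero n] {q C : ℝ} (hq : 0 ≤ q) (hC : 0 ≤ C)
    (hstep : ∀ x, inRowSpace A (x - y) →
      ∑ i, rowProb A i * vnormSq (rkStep A b i x - y) ≤ q * vnormSq (x - y) + C)
    (h0 : inRowSpace A (x0 - y)) (r : ℕ) :
    ∑ ω : Fin r → Fin n, pathWeight A ω * vnormSq (rkSeq A b x0 (extendPath ω) r - y)
      ≤ q ^ r * vnormSq (x0 - y) + C * ∑ s ∈ range r, q ^ s := by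
  induction r with
  | zero => simp [pathWeight, rkSeq]
  | succ r ih =>
    simp only [sum_pathWeight_mul_eq_sum_snoc, rkSeq_extendPath_snoc]
    calc ∑ ω : Fin r → Fin n, pathWeight A ω
          * ∑ i, rowProb A i * vnormSq (rkStep A b i (rkSeq A b x0 (extendPath ω) r) - y)
        ≤ ∑ ω : Fin r → Fin n, pathWeight A ω
          * (q * vnormSq (rkSeq A b x0 (extendPath ω) r - y) + C) := by
          gcongr with ω
          · exact pathWeight_nonneg ω
          · exact hstep _ (inRowSpace_rkSeq_sub h0 _ r)
      _ = q * ∑ ω : Fin r → Fin n, pathWeight A ω * vnormSq (rkSeq A b x0 (extendPath ω) r - y)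
          + C * ∑ ω : Fin r → Fin n, pathWeight A ω := by
          simp only [mul_sum, ← sum_add_distrib]
          exact sum_congr rfl fun ω _ => by ring
      _ ≤ q * (q ^ r * vnormSq (x0 - y) + C * ∑ s ∈ range r, q ^ s) + C * 1 := by
          gcongr
          exact sum_pathWeight_le_one r
      _ = q ^ (r + 1) * vnormSq (x0 - y) + C * ∑ s ∈ range (r + 1), q ^ s := by
          rw [geom_sum_succ]
          ring

end Iterates

lemma IsMoorePenrose.div_frobSq_mul_geom_sum_le {n d : ℕ} {A : Matrix (Fin n) (Fin d) ℝ}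
    {Ap : Matrix (Fin d) (Fin n) ℝ} (hAp : IsMoorePenrose A Ap) {c : ℝ} (hc : 0 ≤ c) (r : ℕ) :
    c / frobSq A * ∑ s ∈ range r, (1 - (kdem A Ap ^ 2)⁻¹) ^ s ≤ matSpectralNorm Ap ^ 2 * c := by
  rcases eq_or_ne (frobSq A) 0 with hA | hA
  · simpa [hA] using mul_nonneg (sq_nonneg (matSpectralNorm Ap)) hc
  have hk := hAp.one_le_kdem_sq hA
  have hgeom : ∑ s ∈ range r, (1 - (kdem A Ap ^ 2)⁻¹) ^ s ≤ kdem A Ap ^ 2 := by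
    have := geom_sum_Ico_le_of_lt_one (m := 0) (n := r)
      (sub_nonneg.2 hAp.inv_kdem_sq_le_one) (sub_lt_self _ (by positivity))
    rwa [← range_eq_Ico, pow_zero, sub_sub_cancel, one_div, inv_inv] at this
  calc c / frobSq A * ∑ s ∈ range r, (1 - (kdem A Ap ^ 2)⁻¹) ^ s
      ≤ c / frobSq A * kdem A Ap ^ 2 := by
        gcongr
        exact div_nonneg hc (frobSq_nonneg_s3 A)
    _ = matSpectralNorm Ap ^ 2 * c := by
        rw [kdem_sq]
        field_simp

theorem rk_mse_bound_general {n d : ℕ} [NeZero n]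
    (A : Matrix (Fin n) (Fin d) ℝ) (b : Fin n → ℝ)
    (Ap : Matrix (Fin d) (Fin n) ℝ) (hAp : IsMoorePenrose A Ap)
    (xstar : Fin d → ℝ) (hx : xstar = Ap *ᵥ b)
    (x0 : Fin d → ℝ) (h0 : inRowSpace A x0) (r : ℕ) :
    ∑ ω : Fin r → Fin n, pathWeight A ω * vnormSq (rkSeq A b x0 (extendPath ω) r - xstar)
      ≤ (1 - (kdem A Ap ^ 2)⁻¹) ^ r * vnormSq (x0 - xstar)
        + matSpectralNorm Ap ^ 2 * vnormSq (b - A *ᵥ xstar) := by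
  have hres := vnormSq_nonneg (b - A *ᵥ xstar)
  calc _ ≤ (1 - (kdem A Ap ^ 2)⁻¹) ^ r * vnormSq (x0 - xstar)
          + vnormSq (b - A *ᵥ xstar) / frobSq A * ∑ s ∈ range r, (1 - (kdem A Ap ^ 2)⁻¹) ^ s :=
        sum_pathWeight_mul_vnormSq_rkSeq_sub_le (sub_nonneg.2 hAp.inv_kdem_sq_le_one)
          (div_nonneg hres (frobSq_nonneg_s3 A))
          (fun _ he => hAp.sum_rowProb_mul_vnormSq_rkStep_sub_le_of_inRowSpace b he)
          (h0.sub (hx ▸ hAp.inRowSpace_mulVec b)) r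
    _ ≤ _ := add_le_add le_rfl (hAp.div_frobSq_mul_geom_sum_le hres r)

/-- mean square error of the RK iterates:
E‖x_r - x⋆‖² ≤ (1 - κ_dem⁻²)^r ‖x_0 - x⋆‖² + ‖A⁺‖² ‖b - Ax⋆‖², assuming x_0 ∈ range(Aᵀ). -/
theorem rk_mse_bound {n d : ℕ} [NeZero n]
    (A : Matrix (Fin n) (Fin d) ℝ) (b : Fin n → ℝ) (hrows : ∀ i, A i ≠ 0)
    (Ap : Matrix (Fin d) (Fin n) ℝ) (hAp : IsMoorePenrose A Ap)
    (xstar : Fin d → ℝ) (hx : xstar = Ap *ᵥ b)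
    (x0 : Fin d → ℝ) (h0 : inRowSpace A x0) (r : ℕ) :
    ∑ ω : Fin r → Fin n, pathWeight A ω * vnormSq (rkSeq A b x0 (extendPath ω) r - xstar)
      ≤ (1 - (kdem A Ap ^ 2)⁻¹) ^ r * vnormSq (x0 - xstar)
        + matSpectralNorm Ap ^ 2 * vnormSq (b - A *ᵥ xstar) :=
  rk_mse_bound_general A b Ap hAp xstar hx x0 h0 r
end
end
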